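/- Let 𝒳 be a compact metric space with nondegenerate Borel probability measure ℙ, and let X_N consist of N i.i.d. ℙ-samples. If f : 𝒳 → 𝒴 has continuous modulus of continuity, then for every t ≥ 0 and ε > 0, ℙ(ω(f,t) − ω_N(f,t) ≤ ε) → 1 as N → ∞, i.e., the discrete modulus of continuity converges to ω(f,t) in probability. -/

import Mathlib

open Metric MeasureTheory ProbabilityTheory Filter

noncomputable def modulus {X Y : Type*} [MetricSpace X] [MetricSpace Y]
    (f : X → Y) (t : ℝ) : ℝ :=
  sSup {r : ℝ | ∃ x x' : X, dist x x' ≤ t ∧ r = dist (f x) (f x')}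

noncomputable def dmodulus {X Y : Type*} [MetricSpace X] [MetricSpace Y]
    (S : Set X) (f : X → Y) (t : ℝ) : ℝ :=
  sSup {r : ℝ | ∃ x ∈ S, ∃ x' ∈ S, dist x x' ≤ t ∧ r = dist (f x) (f x')}

/-!
If the sample is an `r/2`-net of `X`, every pair `x, x'` with `dist x x' ≤ t - r` is shadowed by
a pair of sample points at distance `≤ t`, so `ω(f, t - r) ≤ ω_N(f, t) + 2 ω(f, r)`; continuity of
`ω(f, ·)` at `0` and at `t` makes the loss `ω(f, t) - ω(f, t - r) + 2 ω(f, r)` small for small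
`r`. The sample fails to be an `r/2`-net only if it misses one of finitely many balls of radius
`r/4` covering `X`, and by independence and nondegeneracy of `P` this happens with probability at
most `∑_c P(B_cᶜ) ^ N → 0`.
-/

open scoped NNReal Topology

namespace Metric

variable {Z : Type*} [PseudoMetricSpace Z] {s N : Set Z}

lemma IsCover.exists_dist_le {ρ : ℝ≥0} (hN : IsCover ρ s N) {x : Z} (hx : x ∈ s) :
    ∃ y ∈ N, dist x y ≤ ρ := by
  simpa using hN.subset_iUnion_closedBall hx

lemma IsCover.of_forall_ball_inter_nonempty {δ : ℝ≥0} {C : Set Z}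
    (hC : s ⊆ ⋃ c ∈ C, ball c δ) (hN : ∀ c ∈ C, (ball c δ ∩ N).Nonempty) :
    IsCover (2 * δ) s N := by
  refine IsCover.of_subset_iUnion_closedBall fun x hx => ?_
  obtain ⟨c, hc, hxc⟩ := Set.mem_iUnion₂.1 (hC hx)
  obtain ⟨y, hyc, hyN⟩ := hN c hc
  refine Set.mem_iUnion₂.2 ⟨y, hyN, ?_⟩
  rw [mem_closedBall, NNReal.coe_mul, NNReal.coe_two]
  linarith [dist_triangle_right x y c, mem_ball.1 hxc, mem_ball.1 hyc]

end Metric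

section Modulus

variable {X Y : Type*} [MetricSpace X] [MetricSpace Y] {f : X → Y} {t : ℝ}

def modulusSet (f : X → Y) (t : ℝ) : Set ℝ :=
  {r | ∃ x x' : X, dist x x' ≤ t ∧ r = dist (f x) (f x')}

lemma modulus_nonneg (f : X → Y) (t : ℝ) : 0 ≤ modulus f t :=
  Real.sSup_nonneg (by rintro _ ⟨x, x', -, rfl⟩; exact dist_nonneg)

lemma dmodulus_nonneg (S : Set X) (f : X → Y) (t : ℝ) : 0 ≤ dmodulus S f t :=
  Real.sSup_nonneg (by rintro _ ⟨x, -, x', -, -, rfl⟩; exact dist_nonneg)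

lemma modulus_of_nonpos (ht : t ≤ 0) : modulus f t = 0 := by
  refine le_antisymm (Real.sSup_le ?_ le_rfl) (modulus_nonneg f t)
  rintro _ ⟨x, x', hxx', rfl⟩
  rw [dist_le_zero.1 (hxx'.trans ht), dist_self]

lemma bddAbove_modulusSet_of_modulus_ne_zero (h : modulus f t ≠ 0) :
    BddAbove (modulusSet f t) := by
  by_contra hbdd
  exact h (Real.sSup_of_not_bddAbove hbdd)

lemma modulusSet_mono {s : ℝ} (hst : s ≤ t) : modulusSet f s ⊆ modulusSet f t := by
  rintro _ ⟨x, x', hxx', rfl⟩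
  exact ⟨x, x', hxx'.trans hst, rfl⟩

lemma dist_le_modulus (hbdd : BddAbove (modulusSet f t)) {x x' : X} (h : dist x x' ≤ t) :
    dist (f x) (f x') ≤ modulus f t :=
  le_csSup hbdd ⟨x, x', h, rfl⟩

lemma dist_le_dmodulus (hbdd : BddAbove (modulusSet f t)) {S : Set X} {x x' : X}
    (hx : x ∈ S) (hx' : x' ∈ S) (h : dist x x' ≤ t) :
    dist (f x) (f x') ≤ dmodulus S f t := by
  refine le_csSup (hbdd.mono ?_) ⟨x, hx, x', hx', h, rfl⟩
  rintro _ ⟨a, -, b, -, hab, rfl⟩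
  exact ⟨a, b, hab, rfl⟩

theorem modulus_sub_le_dmodulus_add {S : Set X} {r : ℝ≥0} (hbdd : BddAbove (modulusSet f t))
    (hrt : r ≤ t) (hS : IsCover (r / 2) Set.univ S) :
    modulus f (t - r) ≤ dmodulus S f t + 2 * modulus f r := by
  refine Real.sSup_le ?_ (by positivity [dmodulus_nonneg S f t, modulus_nonneg f r])
  rintro _ ⟨x, x', hxx', rfl⟩
  obtain ⟨s, hs, hxs⟩ := hS.exists_dist_le (Set.mem_univ x)
  obtain ⟨s', hs', hxs'⟩ := hS.exists_dist_le (Set.mem_univ x')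
  push_cast at hxs hxs'
  have hss' : dist s s' ≤ t := by
    linarith [dist_triangle4 s x x' s', dist_comm s x]
  have hbdd_r := hbdd.mono (modulusSet_mono hrt)
  calc dist (f x) (f x')
      ≤ dist (f x) (f s) + dist (f s) (f s') + dist (f s') (f x') := dist_triangle4 _ _ _ _
    _ ≤ modulus f r + dmodulus S f t + modulus f r := by
        gcongr
        · exact dist_le_modulus hbdd_r (by linarith)
        · exact dist_le_dmodulus hbdd hs hs' hss'
        · exact dist_le_modulus hbdd_r (by linarith [dist_comm s' x'])
    _ = dmodulus S f t + 2 * modulus f r := by ring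

end Modulus

lemma exists_increments_le_of_continuousOn_Ici {g : ℝ → ℝ} (hg : ContinuousOn g (Set.Ici 0))
    {t ε : ℝ} (ht : 0 < t) (hε : 0 < ε) :
    ∃ r, 0 < r ∧ r ≤ t ∧ g r - g 0 ≤ ε ∧ g t - g (t - r) ≤ ε := by
  have h0 : Tendsto g (𝓝[>] 0) (𝓝 (g 0)) :=
    ((hg 0 Set.self_mem_Ici).mono Set.Ioi_subset_Ici_self).tendsto
  have hsub : Tendsto (fun r => t - r) (𝓝[>] 0) (𝓝[Set.Ici 0] t) := by
    refine tendsto_nhdsWithin_iff.2 ⟨?_, ?_⟩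
    · simpa using ((continuous_sub_left t).tendsto 0).mono_left nhdsWithin_le_nhds
    · filter_upwards [Ioo_mem_nhdsGT ht] with r hr
      exact sub_nonneg.2 hr.2.le
  have ht' : Tendsto (fun r => g (t - r)) (𝓝[>] 0) (𝓝 (g t)) :=
    (hg t (Set.mem_Ici.2 ht.le)).tendsto.comp hsub
  have hIoo : ∀ᶠ r in 𝓝[>] 0, r ∈ Set.Ioo 0 t := Ioo_mem_nhdsGT ht
  have hgr : ∀ᶠ r in 𝓝[>] 0, g r < g 0 + ε :=
    h0.eventually (gt_mem_nhds (lt_add_of_pos_right _ hε))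
  have hgtr : ∀ᶠ r in 𝓝[>] 0, g t - ε < g (t - r) :=
    ht'.eventually (lt_mem_nhds (sub_lt_self _ hε))
  obtain ⟨r, ⟨hr0, hrt⟩, hgr, hgtr⟩ := (hIoo.and (hgr.and hgtr)).exists
  exact ⟨r, hr0, hrt.le, by linarith, by linarith⟩

section Sampling

variable {X Ω : Type*} [MeasurableSpace X] [MeasurableSpace Ω] {P : Measure X} {μ : Measure Ω}
  {ξ : ℕ → Ω → X}

lemma measure_biInter_range_preimage_eq_pow (hmeas : ∀ i, Measurable (ξ i))
    (hindep : iIndepFun ξ μ) (hid : ∀ i, μ.map (ξ i) = P) {A : Set X} (hA : MeasurableSet A)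
    (N : ℕ) : μ (⋂ i ∈ Finset.range N, ξ i ⁻¹' A) = P A ^ N := by
  have hprob : ∀ i, μ (ξ i ⁻¹' A) = P A := fun i => by
    rw [← hid i, Measure.map_apply (hmeas i) hA]
  rw [hindep.meas_biInter fun i _ => ⟨A, hA, rfl⟩, Finset.prod_congr rfl fun i _ => hprob i,
    Finset.prod_const, Finset.card_range]

lemma tendsto_measure_biInter_range_preimage (hmeas : ∀ i, Measurable (ξ i))
    (hindep : iIndepFun ξ μ) (hid : ∀ i, μ.map (ξ i) = P) {A : Set X} (hA : MeasurableSet A)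
    (hPA : P A < 1) : Tendsto (fun N => μ (⋂ i ∈ Finset.range N, ξ i ⁻¹' A)) atTop (𝓝 0) := by
  simpa only [measure_biInter_range_preimage_eq_pow hmeas hindep hid hA] using
    ENNReal.tendsto_pow_atTop_nhds_zero_of_lt_one hPA

variable [MetricSpace X] [BorelSpace X] [IsProbabilityMeasure P]

lemma measure_compl_ball_lt_one (hnd : ∀ x : X, ∀ U : Set X, IsOpen U → x ∈ U → 0 < P U)
    (c : X) {δ : ℝ} (hδ : 0 < δ) : P (ball c δ)ᶜ < 1 := by
  rw [prob_compl_eq_one_sub measurableSet_ball]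
  exact ENNReal.sub_lt_self ENNReal.one_ne_top one_ne_zero
    (hnd c _ isOpen_ball (mem_ball_self hδ)).ne'

theorem tendsto_measure_not_isCover_sample [CompactSpace X]
    (hnd : ∀ x : X, ∀ U : Set X, IsOpen U → x ∈ U → 0 < P U) (hmeas : ∀ i, Measurable (ξ i))
    (hindep : iIndepFun ξ μ) (hid : ∀ i, μ.map (ξ i) = P) {ρ : ℝ≥0} (hρ : 0 < ρ) :
    Tendsto (fun N => μ {ω | ¬ IsCover ρ Set.univ ((fun i => ξ i ω) '' Set.Iio N)})
      atTop (𝓝 0) := by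
  set δ : ℝ≥0 := ρ / 2
  have hδ : (0 : ℝ) < δ := by positivity
  obtain ⟨C, -, hCfin, hC⟩ := finite_cover_balls_of_compact (isCompact_univ (X := X)) hδ
  lift C to Finset X using hCfin
  have hbad : ∀ N, {ω | ¬ IsCover ρ Set.univ ((fun i => ξ i ω) '' Set.Iio N)} ⊆
      ⋃ c ∈ C, ⋂ i ∈ Finset.range N, ξ i ⁻¹' (ball c δ)ᶜ := by
    intro N ω hnot
    by_contra hmiss
    simp only [Set.mem_iUnion, Set.mem_iInter, Set.mem_compl_iff, Set.mem_preimage,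
      not_exists, not_forall, not_not] at hmiss
    refine hnot ?_
    rw [← mul_div_cancel₀ ρ two_ne_zero]
    refine IsCover.of_forall_ball_inter_nonempty hC fun c hc => ?_
    obtain ⟨i, hi, hic⟩ := hmiss c hc
    exact ⟨ξ i ω, hic, i, Finset.mem_range.1 hi, rfl⟩
  have hsum : Tendsto (fun N => ∑ c ∈ C, μ (⋂ i ∈ Finset.range N, ξ i ⁻¹' (ball c δ)ᶜ))
      atTop (𝓝 0) := by
    simpa using tendsto_finsetSum C fun c _ => tendsto_measure_biInter_range_preimage hmeas
      hindep hid measurableSet_ball.compl (measure_compl_ball_lt_one hnd c hδ)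
  exact tendsto_of_tendsto_of_tendsto_of_le_of_le tendsto_const_nhds hsum (fun _ => zero_le)
    fun N => (measure_mono (hbad N)).trans (measure_biUnion_finset_le _ _)

end Sampling

lemma tendsto_toReal_measure_nhds_one {Ω ι : Type*} [MeasurableSpace Ω] {μ : Measure Ω}
    [IsProbabilityMeasure μ] {l : Filter ι} {s t : ι → Set Ω}
    (ht : Tendsto (fun i => μ (t i)) l (𝓝 0)) (hst : ∀ i, (s i)ᶜ ⊆ t i) :
    Tendsto (fun i => (μ (s i)).toReal) l (𝓝 1) := by
  -- `s i` need not be measurable, so only subadditivity of `μ` is available.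
  have hlow : ∀ i, 1 - μ (t i) ≤ μ (s i) := fun i => tsub_le_iff_right.2 <|
    calc 1 = μ (s i ∪ (s i)ᶜ) := by rw [Set.union_compl_self, measure_univ]
      _ ≤ μ (s i) + μ (t i) := (measure_union_le _ _).trans (by gcongr; exact hst i)
  have hone : Tendsto (fun i => μ (s i)) l (𝓝 1) :=
    tendsto_of_tendsto_of_tendsto_of_le_of_le
      (by simpa using ENNReal.Tendsto.sub tendsto_const_nhds ht (Or.inl ENNReal.one_ne_top))
      tendsto_const_nhds hlow fun _ => prob_le_one
  simpa [Function.comp_def] using (ENNReal.tendsto_toReal ENNReal.one_ne_top).comp hone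

theorem dmodulus_consistency_in_probability_general {X Y : Type*} [MetricSpace X]
    [CompactSpace X] [MetricSpace Y]
    [MeasurableSpace X] [BorelSpace X]
    (P : Measure X) [IsProbabilityMeasure P]
    (hnd : ∀ x : X, ∀ U : Set X, IsOpen U → x ∈ U → 0 < P U)
    {Ω : Type*} [MeasurableSpace Ω] (μ : Measure Ω) [IsProbabilityMeasure μ]
    (ξ : ℕ → Ω → X) (hmeas : ∀ i, Measurable (ξ i))
    (hindep : iIndepFun ξ μ)
    (hid : ∀ i, Measure.map (ξ i) μ = P)
    (f : X → Y) (hcont : ContinuousOn (modulus f) (Set.Ici (0 : ℝ)))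
    (t : ℝ) (ε : ℝ) (hε : 0 < ε) :
    Tendsto (fun N =>
        (μ {ω | modulus f t -
            dmodulus ((fun i => ξ i ω) '' Set.Iio N) f t ≤ ε}).toReal)
      atTop (nhds 1) := by
  by_cases hle : modulus f t ≤ ε
  · refine tendsto_toReal_measure_nhds_one (t := fun _ => ∅) (by simp) fun N ω hω => hω ?_
    show _ - _ ≤ ε
    linarith [dmodulus_nonneg ((fun i => ξ i ω) '' Set.Iio N) f t]
  have hpos : 0 < modulus f t := hε.trans (not_le.1 hle)
  have ht : 0 < t := not_le.1 fun ht => hpos.ne' (modulus_of_nonpos ht)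
  have hbdd := bddAbove_modulusSet_of_modulus_ne_zero hpos.ne'
  obtain ⟨r, hr, hrt, hsmall, hstep⟩ :=
    exists_increments_le_of_continuousOn_Ici hcont ht (by positivity : 0 < ε / 3)
  rw [modulus_of_nonpos le_rfl, sub_zero] at hsmall
  lift r to ℝ≥0 using hr.le
  have hnet := tendsto_measure_not_isCover_sample hnd hmeas hindep hid (half_pos hr)
  refine tendsto_toReal_measure_nhds_one hnet fun N ω hω hcov => hω ?_
  show _ - _ ≤ ε
  linarith [modulus_sub_le_dmodulus_add hbdd hrt hcov]

/-- consistency in probability of the discrete modulus of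
continuity on i.i.d. empirical data sites, for each fixed `t ≥ 0`. -/
theorem dmodulus_consistency_in_probability {X Y : Type*} [MetricSpace X]
    [CompactSpace X] [MetricSpace Y]
    [MeasurableSpace X] [BorelSpace X]
    (P : Measure X) [IsProbabilityMeasure P]
    (hnd : ∀ x : X, ∀ U : Set X, IsOpen U → x ∈ U → 0 < P U)
    {Ω : Type*} [MeasurableSpace Ω] (μ : Measure Ω) [IsProbabilityMeasure μ]
    (ξ : ℕ → Ω → X) (hmeas : ∀ i, Measurable (ξ i))
    (hindep : iIndepFun ξ μ)
    (hid : ∀ i, Measure.map (ξ i) μ = P)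
    (f : X → Y) (hcont : ContinuousOn (modulus f) (Set.Ici (0 : ℝ)))
    (t : ℝ) (ht : 0 ≤ t) (ε : ℝ) (hε : 0 < ε) :
    Tendsto (fun N =>
        (μ {ω | modulus f t -
            dmodulus ((fun i => ξ i ω) '' Set.Iio N) f t ≤ ε}).toReal)
      atTop (nhds 1) :=
  dmodulus_consistency_in_probability_general P hnd μ ξ hmeas hindep hid f hcont t ε hε
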